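/- arXiv:2206.07247 — 2 statements merged into one kernel-verified Lean document; each statement's English description precedes it below -/
import Mathlib

section
/- In the two-user two-item instance (relevances 0.8,0.3;0.5,0.4, top-1 exposure only), any allocation satisfying the proportional exposure-fairness constraint Exp_{i1}/Merit_{i1}=Exp_{i2}/Merit_{i2} with Merit_{i1}=1.3, Merit_{i2}=0.7 that maximizes user utility yields item 2 an impact of 0.28, which is strictly less than its impact 0.35 under the uniform policy; hence the exposure-fair policy does not dominate the uniform ranking policy. -/
noncomputable def rel : Fin 2 → Fin 2 → ℝ := ![![0.8, 0.3], ![0.5, 0.4]]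

noncomputable def expo : Fin 2 → ℝ := ![1, 0]

/-- Impact of item `i` under the position allocation of item `j`. -/
noncomputable def Imp (X : Fin 2 → Fin 2 → Fin 2 → ℝ) (i j : Fin 2) : ℝ :=
  ∑ u, ∑ k, expo k * rel u i * X u j k

def DS (X : Fin 2 → Fin 2 → Fin 2 → ℝ) : Prop :=
  (∀ u i k, 0 ≤ X u i k) ∧ (∀ u i, ∑ k, X u i k = 1) ∧ (∀ u k, ∑ i, X u i k = 1)

noncomputable def Util (X : Fin 2 → Fin 2 → Fin 2 → ℝ) : ℝ :=
  ∑ u, ∑ i, ∑ k, expo k * rel u i * X u i k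

/-- Amortized exposure of item `i`. -/
noncomputable def Exp (X : Fin 2 → Fin 2 → Fin 2 → ℝ) (i : Fin 2) : ℝ :=
  ∑ u, ∑ k, expo k * X u i k

noncomputable def Xunif : Fin 2 → Fin 2 → Fin 2 → ℝ := fun _ _ _ => 1 / 2

noncomputable def Y0 : Fin 2 → Fin 2 → Fin 2 → ℝ :=
  ![![![1, 0], ![0, 1]], ![![0.3, 0.7], ![0.7, 0.3]]]

lemma Y0DS : DS Y0 := by
  refine ⟨?_, ?_, ?_⟩ <;> intro u <;> intro x <;>
    fin_cases u <;> fin_cases x <;>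
    first
      | (intro k; fin_cases k <;> simp [Y0] <;> try norm_num)
      | (simp [Y0, Fin.sum_univ_two]; try norm_num)

/-- Any utility-maximizing allocation satisfying the proportional
exposure-fairness constraint (Merit₁ = 1.3, Merit₂ = 0.7) gives item 2 impact
0.28 < 0.35 = its impact under the uniform policy, hence the exposure-fair
policy does not dominate the uniform policy. -/
theorem stmt1 (X : Fin 2 → Fin 2 → Fin 2 → ℝ) (hDS : DS X)
    (hfair : Exp X 0 / 1.3 = Exp X 1 / 0.7)
    (hmax : ∀ Y, DS Y → Exp Y 0 / 1.3 = Exp Y 1 / 0.7 → Util Y ≤ Util X) :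
    Imp X 1 1 = 0.28 ∧ Imp Xunif 1 1 = 0.35 ∧ Imp X 1 1 < Imp Xunif 1 1 := by
  obtain ⟨hpos, hrow, hcol⟩ := hDS
  have hfairY : Exp Y0 0 / 1.3 = Exp Y0 1 / 0.7 := by
    simp [Exp, Y0, expo, Fin.sum_univ_two]; norm_num
  have hU := hmax Y0 Y0DS hfairY
  have hUY : Util Y0 = 1.23 := by
    simp [Util, Y0, expo, rel, Fin.sum_univ_two]; norm_num
  -- unpack
  have h00 := hcol 0 0
  have h10 := hcol 1 0
  simp [Fin.sum_univ_two] at h00 h10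
  have hf : X 0 0 0 + X 1 0 0 + (X 0 1 0 + X 1 1 0) = 2 := by linarith
  have hfair' : X 0 0 0 + X 1 0 0 = 1.3 := by
    simp [Exp, expo, Fin.sum_univ_two] at hfair
    field_simp at hfair
    linarith
  have hUX : Util X = 0.8 * X 0 0 0 + 0.3 * X 0 1 0 + 0.5 * X 1 0 0 + 0.4 * X 1 1 0 := by
    simp [Util, expo, rel, Fin.sum_univ_two]; ring
  rw [hUY, hUX] at hU
  have ha1 : X 0 0 0 ≤ 1 := by
    have := hpos 0 1 0; linarith
  have ha : X 0 0 0 = 1 := by linarith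
  have hb : X 1 0 0 = 0.3 := by linarith
  refine ⟨?_, ?_, ?_⟩
  · simp [Imp, expo, rel, Fin.sum_univ_two]
    have : X 0 1 0 = 0 := by linarith
    rw [this]
    have : X 1 1 0 = 0.7 := by linarith
    rw [this]; norm_num
  · simp [Imp, Xunif, expo, rel, Fin.sum_univ_two]; norm_num
  · have h1 : Imp X 1 1 = 0.28 := by
      simp [Imp, expo, rel, Fin.sum_univ_two]
      have e1 : X 0 1 0 = 0 := by linarith
      have e2 : X 1 1 0 = 0.7 := by linarith
      rw [e1, e2]; norm_num
    have h2 : Imp Xunif 1 1 = 0.35 := by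
      simp [Imp, Xunif, expo, rel, Fin.sum_univ_two]; norm_num
    rw [h1, h2]; norm_num
end

section
/- For the α-NSW maximizer with K=1, linear utilities, and weights w_i=Merit_i^α > 0, each item i satisfies the weighted dominance guarantee: u_i(x_i) ≥ (n·w_i/Σ_j w_j) · u_i(uniform), where u_i(uniform)=(1/n)Σ_u r(u,i). -/
noncomputable def util (m n : ℕ) (r : Fin m → Fin n → ℝ)
    (x : Fin m → Fin n → ℝ) (i j : Fin n) : ℝ := ∑ u, r u i * x u j

def Feasible (m n : ℕ) (x : Fin m → Fin n → ℝ) : Prop :=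
  (∀ u i, 0 ≤ x u i) ∧ (∀ u, ∑ i, x u i = 1)

/-- For the α-NSW maximizer with K = 1, linear utilities and positive weights
`w_i = Merit_i^α`, every item satisfies the weighted dominance guarantee:
`u_i(x_i) ≥ (n·w_i / Σ_j w_j) · u_i(uniform)` with
`u_i(uniform) = (1/n) Σ_u r(u,i)`. -/
theorem stmt18 (m n : ℕ) (r : Fin m → Fin n → ℝ)
    (Merit : Fin n → ℝ) (hM : ∀ i, 0 < Merit i) (α : ℝ)
    (x : Fin m → Fin n → ℝ) (hx : Feasible m n x)
    (hpos : ∀ i, 0 < util m n r x i i)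
    (hmax : ∀ y, Feasible m n y →
      ∏ i, (util m n r y i i) ^ (Merit i ^ α)
        ≤ ∏ i, (util m n r x i i) ^ (Merit i ^ α)) :
    ∀ i : Fin n,
      ((n : ℝ) * Merit i ^ α / ∑ j, Merit j ^ α) * ((1 / (n : ℝ)) * ∑ u, r u i)
        ≤ util m n r x i i := by
  intro i
  have hn : (0:ℝ) < n := by exact_mod_cast i.pos
  set w : Fin n → ℝ := fun j => Merit j ^ α with hwdef
  have hw : ∀ j, 0 < w j := fun j => Real.rpow_pos_of_pos (hM j) α
  set W : ℝ := ∑ j, w j with hWdef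
  have hW : 0 < W := Finset.sum_pos (fun j _ => hw j) ⟨i, Finset.mem_univ i⟩
  set U : Fin n → ℝ := fun j => util m n r x j j with hUdef
  have hU : ∀ j, 0 < U j := hpos
  set S : ℝ := ∑ u, r u i with hSdef
  by_cases hS : S ≤ 0
  · have h1 : (n : ℝ) * w i / W * (1 / n * S) ≤ 0 := by
      apply mul_nonpos_of_nonneg_of_nonpos
      · exact div_nonneg (mul_nonneg hn.le (hw i).le) hW.le
      · exact mul_nonpos_of_nonneg_of_nonpos (by positivity) hS
    exact h1.trans (hU i).le
  push_neg at hS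
  -- the perturbed utilities
  set e : Fin n → ℝ := fun j => if j = i then S else 0 with hedef
  have he : ∀ j, 0 ≤ e j := by
    intro j; simp only [hedef]; split <;> [exact hS.le; rfl]
  set g : ℝ → ℝ := fun t => ∑ j, w j * Real.log ((1 - t) * U j + t * e j) with hgdef
  have hvpos : ∀ t ∈ Set.Ico (0:ℝ) 1, ∀ j, 0 < (1 - t) * U j + t * e j := by
    intro t ht j
    have h1 : 0 < (1 - t) * U j := mul_pos (by linarith [ht.2]) (hU j)
    have h2 : 0 ≤ t * e j := mul_nonneg ht.1 (he j)
    linarith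
  have hg0 : g 0 = ∑ j, w j * Real.log (U j) := by
    simp [hgdef]
  -- Step 1 : g t ≤ g 0 on [0,1)
  have step1 : ∀ t ∈ Set.Ico (0:ℝ) 1, g t ≤ g 0 := by
    intro t ht
    set y : Fin m → Fin n → ℝ :=
      fun u j => (1 - t) * x u j + t * (if j = i then 1 else 0) with hydef
    have hyfeas : Feasible m n y := by
      constructor
      · intro u j
        have := hx.1 u j
        have h1 : (0:ℝ) ≤ (1 - t) * x u j := mul_nonneg (by linarith [ht.2]) this
        have h2 : (0:ℝ) ≤ t * (if j = i then 1 else 0) := by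
          apply mul_nonneg ht.1; split <;> norm_num
        simpa [hydef] using add_nonneg h1 h2
      · intro u
        simp only [hydef]
        rw [Finset.sum_add_distrib, ← Finset.mul_sum, ← Finset.mul_sum, hx.2 u,
          Finset.sum_ite_eq' Finset.univ i (fun _ => (1:ℝ))]
        simp
    have hutil : ∀ j, util m n r y j j = (1 - t) * U j + t * e j := by
      intro j
      simp only [util, hydef, hUdef, hedef]
      rw [Finset.sum_congr rfl (fun u _ => by ring :
        ∀ u ∈ Finset.univ, r u j * ((1 - t) * x u j + t * (if j = i then 1 else 0))
          = (1 - t) * (r u j * x u j) + t * (r u j * (if j = i then 1 else 0)))]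
      rw [Finset.sum_add_distrib, ← Finset.mul_sum, ← Finset.mul_sum]
      congr 1
      congr 1
      by_cases h : j = i
      · subst h; simp [hSdef]
      · simp [h]
    have hmax' := hmax y hyfeas
    have hlog : Real.log (∏ j, (util m n r y j j) ^ (w j))
        ≤ Real.log (∏ j, (U j) ^ (w j)) := by
      apply Real.log_le_log
      · apply Finset.prod_pos
        intro j _
        rw [hutil j]
        exact Real.rpow_pos_of_pos (hvpos t ht j) _
      · exact hmax'
    rw [Real.log_prod (fun j _ => by
          rw [hutil j]; exact (Real.rpow_pos_of_pos (hvpos t ht j) _).ne'),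
        Real.log_prod (fun j _ => (Real.rpow_pos_of_pos (hU j) _).ne')] at hlog
    rw [hg0]
    calc g t = ∑ j, w j * Real.log ((1 - t) * U j + t * e j) := rfl
      _ = ∑ j, Real.log ((util m n r y j j) ^ (w j)) := by
          apply Finset.sum_congr rfl
          intro j _
          rw [hutil j, Real.log_rpow (hvpos t ht j)]
      _ ≤ ∑ j, Real.log ((U j) ^ (w j)) := hlog
      _ = ∑ j, w j * Real.log (U j) := by
          apply Finset.sum_congr rfl
          intro j _
          rw [Real.log_rpow (hU j)]
  -- Step 2 : derivative of g at 0
  set D : ℝ := ∑ j, w j * ((e j - U j) / U j) with hDdef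
  have hderiv : HasDerivAt g D 0 := by
    apply HasDerivAt.fun_sum
    intro j _
    have haff : HasDerivAt (fun t : ℝ => (1 - t) * U j + t * e j) (e j - U j) 0 := by
      have h1 : HasDerivAt (fun t : ℝ => (1 - t) * U j) (-U j) 0 := by
        simpa using (((hasDerivAt_const (0:ℝ) (1:ℝ)).sub (hasDerivAt_id 0)).mul_const (U j))
      have h2 : HasDerivAt (fun t : ℝ => t * e j) (e j) 0 := by
        simpa using (hasDerivAt_id (0:ℝ)).mul_const (e j)
      exact (h1.fun_add h2).congr_deriv (by ring)
    have hne : (1 - (0:ℝ)) * U j + 0 * e j ≠ 0 := by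
      simpa using (hU j).ne'
    have := (haff.log hne).const_mul (w j)
    simpa using this
  -- Step 3 : D ≤ 0
  have hD0 : D ≤ 0 := by
    have hd : HasDerivWithinAt g D (Set.Ioi 0) 0 := hderiv.hasDerivWithinAt
    rw [hasDerivWithinAt_iff_tendsto_slope] at hd
    have hset : Set.Ioi (0:ℝ) \ {0} = Set.Ioi 0 :=
      Set.diff_singleton_eq_self (by simp)
    rw [hset] at hd
    refine le_of_tendsto hd ?_
    filter_upwards [Ioc_mem_nhdsGT_of_mem (Set.mem_Ico.mpr ⟨le_refl (0:ℝ), one_half_pos⟩)]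
      with t ht
    have h1 : g t ≤ g 0 := step1 t ⟨ht.1.le, by linarith [ht.2]⟩
    have h2 : (0:ℝ) < t := ht.1
    rw [slope_def_field]
    have : (g t - g 0) / (t - 0) ≤ 0 := div_nonpos_of_nonpos_of_nonneg (by linarith) (by linarith)
    simpa [div_eq_inv_mul] using this
  -- Step 4 : compute D
  have hDeq : D = w i * (S / U i) - W := by
    have hterm : ∀ j, w j * ((e j - U j) / U j)
        = (if j = i then w j * (S / U j) else 0) - w j := by
      intro j
      by_cases h : j = i
      · subst h
        simp only [hedef, if_pos rfl]
        rw [sub_div, div_self (hU j).ne', mul_sub, mul_one]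
        simp
      · simp only [hedef, if_neg h]
        rw [zero_sub, neg_div, div_self (hU j).ne']
        ring
    rw [hDdef, Finset.sum_congr rfl (fun j _ => hterm j), Finset.sum_sub_distrib,
      Finset.sum_ite_eq' Finset.univ i (fun j => w j * (S / U j)),
      if_pos (Finset.mem_univ i), hWdef]
  -- Step 5 : conclude
  have hkey : w i * S ≤ W * U i := by
    rw [hDeq] at hD0
    have h1 : w i * (S / U i) ≤ W := by linarith
    calc w i * S = (w i * (S / U i)) * U i := by
          rw [mul_assoc, div_mul_cancel₀ _ (hU i).ne']
      _ ≤ W * U i := mul_le_mul_of_nonneg_right h1 (hU i).le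
  show ((n : ℝ) * w i / W) * (1 / (n : ℝ) * S) ≤ U i
  have hfinal : ((n : ℝ) * w i / W) * (1 / (n : ℝ) * S) = w i * S / W := by
    field_simp
  rw [hfinal, div_le_iff₀ hW]
  linarith
end
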